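/- arXiv:2010.08163 — 2 statements merged into one kernel-verified Lean document; each statement's English description precedes it below -/
import Mathlib

section
/- Assume π1, π2, π3 > 0. Let L = (L1, L2) : ℝ → ℝ² be a differentiable solution of the system L1' = F1(L1,L2), L2' = F2(L1,L2) with L(t) ∈ Ω for all t ≥ 0. Then for all t ≥ 0, (1/2)·d/dt[(L1(t) − L2(t))²] = −π1·J(L1(t),L2(t))·(L1(t) − L2(t))². -/
noncomputable section

/-- The flux `J(L1, L2)`. -/
def J (π2 π3 L1 L2 : ℝ) : ℝ :=
  1 / (1 + π2 * (L1 + L2) + π3 * (L1 ^ 2 + L2 ^ 2))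

/-- The first component of the vector field. -/
def F1 (π0 π1 π2 π3 L1 L2 : ℝ) : ℝ :=
  J π2 π3 L1 L2 * (1 - L1 - L2) - π0 - π1 * J π2 π3 L1 L2 * L1

/-- The second component of the vector field. -/
def F2 (π0 π1 π2 π3 L1 L2 : ℝ) : ℝ :=
  J π2 π3 L1 L2 * (1 - L1 - L2) - π0 - π1 * J π2 π3 L1 L2 * L2

/-- The domain `Ω`. -/
def Omega : Set (ℝ × ℝ) := {p | 0 ≤ p.1 ∧ 0 ≤ p.2 ∧ p.1 + p.2 ≤ 1}

theorem F1_sub_F2 (π0 π1 π2 π3 x y : ℝ) :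
    F1 π0 π1 π2 π3 x y - F2 π0 π1 π2 π3 x y = -π1 * J π2 π3 x y * (x - y) := by
  unfold F1 F2
  ring

theorem diff_decay_general (π0 π1 π2 π3 : ℝ)
    (L1 L2 : ℝ → ℝ)
    (hd1 : ∀ t : ℝ, HasDerivAt L1 (F1 π0 π1 π2 π3 (L1 t) (L2 t)) t)
    (hd2 : ∀ t : ℝ, HasDerivAt L2 (F2 π0 π1 π2 π3 (L1 t) (L2 t)) t) :
    ∀ t : ℝ, 0 ≤ t →
      (1 / 2) * deriv (fun s => (L1 s - L2 s) ^ 2) t =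
        -π1 * J π2 π3 (L1 t) (L2 t) * (L1 t - L2 t) ^ 2 := by
  intro t _
  have hgap : HasDerivAt (fun s => L1 s - L2 s)
      (-π1 * J π2 π3 (L1 t) (L2 t) * (L1 t - L2 t)) t :=
    F1_sub_F2 π0 π1 π2 π3 (L1 t) (L2 t) ▸ (hd1 t).sub (hd2 t)
  rw [(hgap.fun_pow 2).deriv]
  ring

/-- along any solution of the system staying in `Ω` for `t ≥ 0`,
`(1/2)·d/dt[(L1 − L2)²] = −π1·J(L1,L2)·(L1 − L2)²`. -/
theorem diff_decay (π0 π1 π2 π3 : ℝ)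
    (hπ1 : 0 < π1) (hπ2 : 0 < π2) (hπ3 : 0 < π3)
    (L1 L2 : ℝ → ℝ)
    (hd1 : ∀ t : ℝ, HasDerivAt L1 (F1 π0 π1 π2 π3 (L1 t) (L2 t)) t)
    (hd2 : ∀ t : ℝ, HasDerivAt L2 (F2 π0 π1 π2 π3 (L1 t) (L2 t)) t)
    (hΩ : ∀ t : ℝ, 0 ≤ t → (L1 t, L2 t) ∈ Omega) :
    ∀ t : ℝ, 0 ≤ t →
      (1 / 2) * deriv (fun s => (L1 s - L2 s) ^ 2) t =
        -π1 * J π2 π3 (L1 t) (L2 t) * (L1 t - L2 t) ^ 2 :=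
  diff_decay_general π0 π1 π2 π3 L1 L2 hd1 hd2
end
end

section
/- Assume 0 < π0 < 1 and π1, π2, π3 > 0. Let (L1, L2) ∈ Ω with ΔL1 + ΔL2 > 0, where ΔL_i = L_i − L_ss. Then 2·(J(L1,L2) − J_ss)·(1 − 2·L_ss − π1·L_ss)·(ΔL1 + ΔL2) − (2 + π1)·J(L1,L2)·(ΔL1 + ΔL2)² < 0. -/
/-!
`L_ss` is the positive root of `2π₀π₃ L² + (2 + 2π₀π₂ + π₁) L = 1 - π₀`, so `(2 + π₁) L_ss < 1`,
i.e. the factor `1 - 2 L_ss - π₁ L_ss` is positive. Since `J_ss = J(L_ss, L_ss)` and the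
denominator of `J` exceeds that of `J_ss` as soon as `L₁ + L₂ > 2 L_ss ≥ 0`, we get `0 < J < J_ss`:
both terms of the expression are then negative.
-/

noncomputable section

/-- Steady-state length `L_ss`. -/
def Lss (π0 π1 π2 π3 : ℝ) : ℝ :=
  ((1 + π0 * π2 + π1 / 2) / (2 * π0 * π3)) *
    (Real.sqrt (1 + 2 * (1 - π0) * π0 * π3 / (1 + π0 * π2 + π1 / 2) ^ 2) - 1)

/-- Steady-state flux `J_ss`. -/
def Jss (π0 π1 π2 π3 : ℝ) : ℝ :=
  1 / (1 + 2 * π2 * Lss π0 π1 π2 π3 + 2 * π3 * (Lss π0 π1 π2 π3) ^ 2)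

open Real

theorem quadratic_of_eq_div_mul_sqrt_sub_one {q a c x : ℝ} (hq : q ≠ 0) (ha : 0 < a)
    (hdisc : 0 ≤ a ^ 2 + q * c) (hx : x = a / q * (√(1 + q * c / a ^ 2) - 1)) :
    q * x ^ 2 + 2 * a * x = c := by
  have harg : 0 ≤ 1 + q * c / a ^ 2 := by
    rw [one_add_div (by positivity)]
    positivity
  have hsq : √(1 + q * c / a ^ 2) ^ 2 = 1 + q * c / a ^ 2 := sq_sqrt harg
  have hlin : q * x + a = a * √(1 + q * c / a ^ 2) := by
    rw [hx]; field_simp; ring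
  have : (q * x + a) ^ 2 = a ^ 2 + q * c := by
    rw [hlin, mul_pow, hsq]; field_simp
  apply mul_left_cancel₀ hq
  linear_combination this

theorem div_mul_sqrt_sub_one_pos {q a c : ℝ} (hq : 0 < q) (ha : 0 < a) (hc : 0 < c) :
    0 < a / q * (√(1 + q * c / a ^ 2) - 1) := by
  have : 1 < √(1 + q * c / a ^ 2) := by
    rw [lt_sqrt zero_le_one, one_pow]
    linarith [show 0 < q * c / a ^ 2 by positivity]
  exact mul_pos (by positivity) (by linarith)

section SteadyState

variable {π0 π1 π2 π3 : ℝ}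

theorem Lss_eq_div_mul_sqrt_sub_one :
    Lss π0 π1 π2 π3 = (1 + π0 * π2 + π1 / 2) / (2 * π0 * π3) *
      (√(1 + 2 * π0 * π3 * (1 - π0) / (1 + π0 * π2 + π1 / 2) ^ 2) - 1) := by
  rw [Lss]
  ring_nf

theorem Lss_quadratic (hπ0 : 0 < π0) (hπ0' : π0 < 1) (hπ1 : 0 < π1) (hπ2 : 0 < π2)
    (hπ3 : 0 < π3) :
    2 * π0 * π3 * Lss π0 π1 π2 π3 ^ 2 + (2 + 2 * π0 * π2 + π1) * Lss π0 π1 π2 π3 = 1 - π0 := by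
  have h := quadratic_of_eq_div_mul_sqrt_sub_one (q := 2 * π0 * π3) (a := 1 + π0 * π2 + π1 / 2)
    (c := 1 - π0) (x := Lss π0 π1 π2 π3) (by positivity) (by positivity)
    (by have := mul_pos hπ0 hπ3; nlinarith) Lss_eq_div_mul_sqrt_sub_one
  linear_combination h

theorem Lss_pos (hπ0 : 0 < π0) (hπ0' : π0 < 1) (hπ1 : 0 < π1) (hπ2 : 0 < π2)
    (hπ3 : 0 < π3) : 0 < Lss π0 π1 π2 π3 := by
  rw [Lss_eq_div_mul_sqrt_sub_one]
  exact div_mul_sqrt_sub_one_pos (by positivity) (by positivity) (by linarith)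

theorem one_sub_two_mul_Lss_sub_mul_Lss_pos (hπ0 : 0 < π0) (hπ0' : π0 < 1) (hπ1 : 0 < π1)
    (hπ2 : 0 < π2) (hπ3 : 0 < π3) :
    0 < 1 - 2 * Lss π0 π1 π2 π3 - π1 * Lss π0 π1 π2 π3 := by
  have hx := Lss_pos hπ0 hπ0' hπ1 hπ2 hπ3
  have hquad := Lss_quadratic hπ0 hπ0' hπ1 hπ2 hπ3
  nlinarith [mul_pos (mul_pos hπ0 hπ3) (mul_pos hx hx), mul_pos (mul_pos hπ0 hπ2) hx]

theorem Jss_eq_J : Jss π0 π1 π2 π3 = J π2 π3 (Lss π0 π1 π2 π3) (Lss π0 π1 π2 π3) := by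
  rw [Jss, J]; ring_nf

end SteadyState

theorem J_denom_lt_of_two_mul_lt_add {π2 π3 x L1 L2 : ℝ} (hπ2 : 0 < π2) (hπ3 : 0 ≤ π3)
    (hx : 0 ≤ x) (hL : x + x < L1 + L2) :
    1 + π2 * (x + x) + π3 * (x ^ 2 + x ^ 2) < 1 + π2 * (L1 + L2) + π3 * (L1 ^ 2 + L2 ^ 2) := by
  have hs : 0 < (L1 - x) + (L2 - x) := by linarith
  have hdiff :
      (1 + π2 * (L1 + L2) + π3 * (L1 ^ 2 + L2 ^ 2)) - (1 + π2 * (x + x) + π3 * (x ^ 2 + x ^ 2)) =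
        π2 * ((L1 - x) + (L2 - x)) +
          π3 * (2 * x * ((L1 - x) + (L2 - x)) + (L1 - x) ^ 2 + (L2 - x) ^ 2) := by
    ring
  have hquad : 0 ≤ 2 * x * ((L1 - x) + (L2 - x)) + (L1 - x) ^ 2 + (L2 - x) ^ 2 := by
    have := mul_nonneg hx hs.le
    positivity
  linarith [mul_pos hπ2 hs, mul_nonneg hπ3 hquad]

theorem J_pos_and_lt_of_two_mul_lt_add {π2 π3 x L1 L2 : ℝ} (hπ2 : 0 < π2) (hπ3 : 0 ≤ π3)
    (hx : 0 ≤ x) (hL : x + x < L1 + L2) :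
    0 < J π2 π3 L1 L2 ∧ J π2 π3 L1 L2 < J π2 π3 x x := by
  have hlt := J_denom_lt_of_two_mul_lt_add hπ2 hπ3 hx hL
  have hpos : 0 < 1 + π2 * (x + x) + π3 * (x ^ 2 + x ^ 2) := by positivity
  exact ⟨one_div_pos.mpr (hpos.trans hlt), one_div_lt_one_div_of_lt hpos hlt⟩

theorem lyapunov_term_neg_of_pos_sum_general (π0 π1 π2 π3 : ℝ)
    (hπ0 : 0 < π0) (hπ0' : π0 < 1) (hπ1 : 0 < π1) (hπ2 : 0 < π2) (hπ3 : 0 < π3)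
    (L1 L2 : ℝ)
    (hsum : (L1 - Lss π0 π1 π2 π3) + (L2 - Lss π0 π1 π2 π3) > 0) :
    2 * (J π2 π3 L1 L2 - Jss π0 π1 π2 π3) *
        (1 - 2 * Lss π0 π1 π2 π3 - π1 * Lss π0 π1 π2 π3) *
        ((L1 - Lss π0 π1 π2 π3) + (L2 - Lss π0 π1 π2 π3)) -
      (2 + π1) * J π2 π3 L1 L2 *
        ((L1 - Lss π0 π1 π2 π3) + (L2 - Lss π0 π1 π2 π3)) ^ 2 < 0 := by
  set x := Lss π0 π1 π2 π3
  set s := (L1 - x) + (L2 - x)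
  have hb := one_sub_two_mul_Lss_sub_mul_Lss_pos hπ0 hπ0' hπ1 hπ2 hπ3
  obtain ⟨hJpos, hJlt⟩ := J_pos_and_lt_of_two_mul_lt_add hπ2 hπ3.le
    (Lss_pos hπ0 hπ0' hπ1 hπ2 hπ3).le (show x + x < L1 + L2 by linarith)
  rw [← Jss_eq_J] at hJlt
  have hdrift : 2 * (J π2 π3 L1 L2 - Jss π0 π1 π2 π3) * (1 - 2 * x - π1 * x) * s < 0 :=
    mul_neg_of_neg_of_pos (mul_neg_of_neg_of_pos (by linarith) hb) hsum
  have hdamp : 0 < (2 + π1) * J π2 π3 L1 L2 * s ^ 2 := by positivity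
  linarith

/-- for `(L1, L2) ∈ Ω` with `ΔL1 + ΔL2 > 0`,
`2·(J − J_ss)·(1 − 2·L_ss − π1·L_ss)·(ΔL1 + ΔL2) − (2 + π1)·J·(ΔL1 + ΔL2)² < 0`. -/
theorem lyapunov_term_neg_of_pos_sum (π0 π1 π2 π3 : ℝ)
    (hπ0 : 0 < π0) (hπ0' : π0 < 1) (hπ1 : 0 < π1) (hπ2 : 0 < π2) (hπ3 : 0 < π3)
    (L1 L2 : ℝ) (hΩ : (L1, L2) ∈ Omega)
    (hsum : (L1 - Lss π0 π1 π2 π3) + (L2 - Lss π0 π1 π2 π3) > 0) :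
    2 * (J π2 π3 L1 L2 - Jss π0 π1 π2 π3) *
        (1 - 2 * Lss π0 π1 π2 π3 - π1 * Lss π0 π1 π2 π3) *
        ((L1 - Lss π0 π1 π2 π3) + (L2 - Lss π0 π1 π2 π3)) -
      (2 + π1) * J π2 π3 L1 L2 *
        ((L1 - Lss π0 π1 π2 π3) + (L2 - Lss π0 π1 π2 π3)) ^ 2 < 0 :=
  lyapunov_term_neg_of_pos_sum_general π0 π1 π2 π3 hπ0 hπ0' hπ1 hπ2 hπ3 L1 L2 hsum
end
end
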